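/- Let H₂ be the 2N × n_v·N block matrix with block rows [I, …, I] and [P₁, …, P_{n_v}] where Pᵢ are N × N permutation matrices, and let C = Σᵢ Pᵢ. Then girth(H₂) = 2 · girth(C), where girth denotes the girth of the associated Tanner graph (with girth 2 assigned to a graph having a multiple edge). -/

import Mathlib

open Matrix

/-- The permutation matrix (over ℕ) associated with a permutation. -/
def permMatrix {N : ℕ} (σ : Equiv.Perm (Fin N)) : Matrix (Fin N) (Fin N) ℕ :=
  Matrix.of fun i j => if σ i = j then 1 else 0

/-- The Tanner graph of an ℕ-valued matrix: the bipartite simple graph on rows ⊕ columns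
with an edge between row `i` and column `j` whenever `M i j ≠ 0`. -/
def tanner {α β : Type*} (M : Matrix α β ℕ) : SimpleGraph (α ⊕ β) :=
  SimpleGraph.fromRel fun u v => ∃ i j, u = Sum.inl i ∧ v = Sum.inr j ∧ M i j ≠ 0

open Classical in
/-- The girth of the Tanner (multi)graph of an ℕ-valued matrix: an entry `≥ 2` is a
multiple edge, giving girth `2`; otherwise the girth of the Tanner simple graph
(`⊤` if there is no cycle). -/
noncomputable def matGirth {α β : Type*} (M : Matrix α β ℕ) : ℕ∞ :=
  if ∃ i j, 2 ≤ M i j then 2 else (tanner M).egirth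


/-- The block matrix with first block row all identities and second block row the
permutation matrices `P j`. -/
def H2mat {N nv : ℕ} (P : Fin nv → Equiv.Perm (Fin N)) :
    Matrix (Fin 2 × Fin N) (Fin nv × Fin N) ℕ :=
  Matrix.of fun p q =>
    if p.1 = 0 then (if p.2 = q.2 then 1 else 0) else permMatrix (P q.1) p.2 q.2

/-!
The Tanner graph of `H₂` is the subdivision of the Tanner multigraph of `C = ∑ Pⱼ`: column
`(j, k)` of `H₂` has exactly two nonzero entries, so it becomes a midpoint on the edge of `C`'s
graph contributed by `Pⱼ`. Subdividing doubles the length of every cycle and creates no new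
ones, so the girth doubles; a multiple edge (an entry `≥ 2` of `C`, girth `2`) becomes a
`4`-cycle, which is shortest because the subdivision is bipartite.
-/

open Sum

namespace SimpleGraph

variable {V E : Type*}

/- A multigraph on `V` with edge set `E` is encoded by `ends`, edge `e` joining the two points
of `ends e`; its subdivision puts a new vertex on every edge. -/
def subdivision (ends : E → Sym2 V) : SimpleGraph (V ⊕ E) where
  Adj
    | inl v, inr e => v ∈ ends e
    | inr e, inl v => v ∈ ends e
    | _, _ => False
  symm := ⟨by rintro (v | e) (w | f) h <;> exact h⟩
  loopless := ⟨by rintro (v | e) h <;> exact h⟩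

def subdivisionColoring (ends : E → Sym2 V) : (subdivision ends).Coloring Bool :=
  Coloring.mk isLeft <| by rintro (v | e) (w | f) h <;> first | exact h.elim | simp

variable {ends : E → Sym2 V}

@[simp] lemma subdivision_adj_inl_inr {v : V} {e : E} :
    (subdivision ends).Adj (inl v) (inr e) ↔ v ∈ ends e := Iff.rfl

@[simp] lemma subdivision_adj_inr_inl {v : V} {e : E} :
    (subdivision ends).Adj (inr e) (inl v) ↔ v ∈ ends e := Iff.rfl

@[simp] lemma not_subdivision_adj_inl_inl {v w : V} : ¬ (subdivision ends).Adj (inl v) (inl w) :=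
  id

@[simp] lemma not_subdivision_adj_inr_inr {e f : E} : ¬ (subdivision ends).Adj (inr e) (inr f) :=
  id

lemma exists_ends_eq_of_adj {v w : V} (h : (fromEdgeSet (Set.range ends)).Adj v w) :
    ∃ e, ends e = s(v, w) :=
  ((fromEdgeSet_adj _).1 h).1

noncomputable def Adj.label {v w : V} (h : (fromEdgeSet (Set.range ends)).Adj v w) : E :=
  (exists_ends_eq_of_adj h).choose

lemma Adj.ends_label {v w : V} (h : (fromEdgeSet (Set.range ends)).Adj v w) :
    ends h.label = s(v, w) :=
  (exists_ends_eq_of_adj h).choose_spec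

lemma fromEdgeSet_adj_of_mem_ends {v w : V} {e : E} (hv : v ∈ ends e) (hw : w ∈ ends e)
    (hvw : v ≠ w) : (fromEdgeSet (Set.range ends)).Adj v w ∧ ends e = s(v, w) := by
  have he : ends e = s(v, w) := (Sym2.mem_and_mem_iff hvw).1 ⟨hv, hw⟩
  exact ⟨(fromEdgeSet_adj _).2 ⟨⟨e, he⟩, hvw⟩, he⟩

namespace Walk

noncomputable def subdivide : ∀ {v w : V}, (fromEdgeSet (Set.range ends)).Walk v w →
    (subdivision ends).Walk (inl v) (inl w)
  | _, _, .nil => .nil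
  | _, _, .cons h p =>
    .cons (v := inr h.label) (by simp [h.ends_label]) (.cons (by simp [h.ends_label]) p.subdivide)

@[simp] lemma length_subdivide {v w : V} (p : (fromEdgeSet (Set.range ends)).Walk v w) :
    p.subdivide.length = 2 * p.length := by
  induction p with
  | nil => rfl
  | cons h p ih => simp [subdivide, ih]; ring

lemma ends_mem_edges_of_inr_mem_support_subdivide {v w : V}
    {p : (fromEdgeSet (Set.range ends)).Walk v w} {e : E} (he : inr e ∈ p.subdivide.support) :
    ends e ∈ p.edges := by
  induction p with
  | nil => simp [subdivide] at he
  | cons h p ih =>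
    simp only [subdivide, support_cons, List.mem_cons, reduceCtorEq, inr.injEq, false_or] at he
    rcases he with rfl | he
    · simp [h.ends_label]
    · simp [ih he]

lemma IsTrail.subdivide {v w : V} {p : (fromEdgeSet (Set.range ends)).Walk v w}
    (hp : p.IsTrail) : p.subdivide.IsTrail := by
  induction p with
  | nil => simp [Walk.subdivide]
  | cons h p ih =>
    rw [isTrail_cons] at hp
    have hnot : ∀ x, s(x, inr h.label) ∉ p.subdivide.edges := fun x hx =>
      hp.2 (h.ends_label ▸ ends_mem_edges_of_inr_mem_support_subdivide
        (p.subdivide.snd_mem_support_of_mem_edges hx))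
    refine (isTrail_cons _ _).2 ⟨(isTrail_cons _ _).2 ⟨ih hp.1, ?_⟩, ?_⟩
    · rw [Sym2.eq_swap]; exact hnot _
    · simp only [edges_cons, List.mem_cons, not_or]
      refine ⟨?_, hnot _⟩
      simpa [Sym2.eq_swap] using ((fromEdgeSet_adj _).1 h).2

lemma ne_of_isTrail_cons_cons {α : Type*} {G : SimpleGraph α} {u x y z : α} {h : G.Adj u x}
    {h' : G.Adj x y} {p : G.Walk y z} (hp : (cons h (cons h' p)).IsTrail) : u ≠ y := by
  rintro rfl
  simp [isTrail_cons, Sym2.eq_swap] at hp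

/- Being a trail rules out backtracking `inl v → inr e → inl v`, so the two ends met around each
`inr e` are distinct and span the edge `ends e`. -/
def unsubdivide : ∀ {v w : V} (c : (subdivision ends).Walk (inl v) (inl w)), c.IsTrail →
    (fromEdgeSet (Set.range ends)).Walk v w
  | _, _, .nil, _ => .nil
  | _, _, .cons (v := inr _) h (.cons (v := inl _) h' p), hc =>
    .cons (fromEdgeSet_adj_of_mem_ends h h' (ne_of_isTrail_cons_cons hc <| congrArg inl ·)).1
      (unsubdivide p hc.of_cons.of_cons)

lemma length_unsubdivide : ∀ {v w : V} (c : (subdivision ends).Walk (inl v) (inl w))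
    (hc : c.IsTrail), 2 * (c.unsubdivide hc).length = c.length
  | _, _, .nil, _ => by simp [unsubdivide]
  | _, _, .cons (v := inr _) h (.cons (v := inl _) h' p), hc => by
    simp only [unsubdivide, length_cons, ← length_unsubdivide p hc.of_cons.of_cons]
    ring

lemma edges_unsubdivide : ∀ {v w : V} (c : (subdivision ends).Walk (inl v) (inl w))
    (hc : c.IsTrail), (c.unsubdivide hc).edges = (c.support.filterMap getRight?).map ends
  | _, _, .nil, _ => by simp [unsubdivide]
  | _, _, .cons (v := inr e) h (.cons (v := inl _) h' p), hc => by
    rw [unsubdivide, edges_cons, edges_unsubdivide p hc.of_cons.of_cons,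
      ← (fromEdgeSet_adj_of_mem_ends h h' (ne_of_isTrail_cons_cons hc <| congrArg inl ·)).2]
    simp [List.filterMap_cons]

lemma IsCycle.isCircuit_unsubdivide (hinj : Function.Injective ends) {v : V}
    {c : (subdivision ends).Walk (inl v) (inl v)} (hc : c.IsCycle) :
    (c.unsubdivide hc.isTrail).IsCircuit := by
  refine ⟨⟨?_⟩, fun h => ?_⟩
  · rw [edges_unsubdivide, ← c.cons_tail_support, List.filterMap_cons, getRight?_inl]
    refine (hc.support_nodup.filterMap fun x y _ hx hy => ?_).map hinj
    rcases x with _ | x <;> rcases y with _ | y <;> simp_all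
  · have hlen := length_unsubdivide c hc.isTrail
    have := hc.three_le_length
    rw [h, length_nil] at hlen
    omega

end Walk

lemma egirth_subdivision_le :
    (subdivision ends).egirth ≤ 2 * (fromEdgeSet (Set.range ends)).egirth := by
  by_cases hG : (fromEdgeSet (Set.range ends)).IsAcyclic
  · simp [hG.egirth_eq_top, ENat.mul_top]
  obtain ⟨a, w, hw, hlen⟩ := exists_egirth_eq_length.2 hG
  have hcirc : w.subdivide.IsCircuit :=
    ⟨hw.isTrail.subdivide, fun h => hw.ne_nil (by simpa using congrArg Walk.length h)⟩
  calc (subdivision ends).egirth ≤ w.subdivide.length := hcirc.egirth_le_length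
    _ = 2 * (fromEdgeSet (Set.range ends)).egirth := by rw [hlen]; simp

lemma two_mul_egirth_le_egirth_subdivision (hinj : Function.Injective ends) :
    2 * (fromEdgeSet (Set.range ends)).egirth ≤ (subdivision ends).egirth := by
  classical
  refine le_egirth.2 fun a c hc => ?_
  obtain ⟨v, hv⟩ : ∃ v, inl v ∈ c.support := by
    rcases a with v | e
    · exact ⟨v, c.start_mem_support⟩
    cases c with
    | nil => exact absurd rfl hc.ne_nil
    | @cons _ x _ h p =>
      rcases x with v | f
      · exact ⟨v, List.mem_cons_of_mem _ p.start_mem_support⟩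
      · exact h.elim
  have hc' := hc.rotate hv
  calc 2 * (fromEdgeSet (Set.range ends)).egirth
      ≤ 2 * ((c.rotate _ hv).unsubdivide hc'.isTrail).length := by
        gcongr
        exact (hc'.isCircuit_unsubdivide hinj).egirth_le_length
    _ = c.length := by
        rw [← Walk.length_rotate c _ hv, ← Walk.length_unsubdivide _ hc'.isTrail]
        simp

theorem egirth_subdivision (hinj : Function.Injective ends) :
    (subdivision ends).egirth = 2 * (fromEdgeSet (Set.range ends)).egirth :=
  egirth_subdivision_le.antisymm (two_mul_egirth_le_egirth_subdivision hinj)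

lemma Coloring.four_le_egirth {α : Type*} {G : SimpleGraph α} (c : G.Coloring Bool) :
    4 ≤ G.egirth :=
  le_egirth.2 fun _ w hw => by
    obtain ⟨r, _⟩ := (c.even_length_iff_congr w).2 Iff.rfl
    have := hw.three_le_length
    exact_mod_cast (by omega : 4 ≤ w.length)

theorem egirth_subdivision_of_not_injective (hloop : ∀ e, ¬ (ends e).IsDiag)
    (hinj : ¬ Function.Injective ends) : (subdivision ends).egirth = 4 := by
  obtain ⟨e, e', he, hne⟩ : ∃ e e', ends e = ends e' ∧ e ≠ e' := by
    simpa [Function.Injective] using hinj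
  obtain ⟨a, b, hab⟩ : ∃ a b, ends e = s(a, b) := Sym2.exists.1 ⟨_, rfl⟩
  have hab' : a ≠ b := by simpa [hab] using hloop e
  let c : (subdivision ends).Walk (inl a) (inl a) :=
    .cons (v := inr e) (by simp [hab]) <| .cons (v := inl b) (by simp [hab]) <|
      .cons (v := inr e') (by simp [← he, hab]) <| .cons (by simp [← he, hab]) .nil
  have hc : c.IsCycle := by
    simp [c, Walk.cons_isCycle_iff, hab', hab'.symm, hne]
  exact le_antisymm hc.egirth_le_length (subdivisionColoring ends).four_le_egirth

end SimpleGraph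

open SimpleGraph

section Tanner

variable {α β : Type*} {M : Matrix α β ℕ}

lemma tanner_eq_subdivision {ends : β → Sym2 α} (h : ∀ i j, i ∈ ends j ↔ M i j ≠ 0) :
    tanner M = subdivision ends := by
  ext (i | j) (i' | j') <;> simp [tanner, h]

lemma matGirth_of_le_one (h : ∀ i j, M i j ≤ 1) : matGirth M = (tanner M).egirth :=
  if_neg fun ⟨i, j, hij⟩ => by have := h i j; omega

end Tanner

section Block

open Finset

variable {N nv : ℕ} (P : Fin nv → Equiv.Perm (Fin N))

/- Column `(j, k)` of `H2mat P` has its nonzero entries in rows `(0, k)` and `(1, (P j)⁻¹ k)`. -/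
def blockEnds (q : Fin nv × Fin N) : Sym2 (Fin 2 × Fin N) :=
  s((0, q.2), (1, (P q.1).symm q.2))

lemma tanner_H2mat : tanner (H2mat P) = subdivision (blockEnds P) := by
  refine tanner_eq_subdivision fun ⟨b, x⟩ ⟨j, k⟩ => ?_
  fin_cases b <;> simp [blockEnds, H2mat, permMatrix, Equiv.eq_symm_apply]

lemma H2mat_le_one (p q) : H2mat P p q ≤ 1 := by
  simp only [H2mat, permMatrix, Matrix.of_apply]
  split_ifs <;> simp

lemma blockEnds_eq_iff {q q' : Fin nv × Fin N} :
    blockEnds P q = blockEnds P q' ↔ q.2 = q'.2 ∧ (P q.1).symm q.2 = (P q'.1).symm q'.2 := by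
  simp [blockEnds]

lemma blockEnds_not_isDiag (q : Fin nv × Fin N) : ¬ (blockEnds P q).IsDiag := by
  simp [blockEnds]

lemma sum_permMatrix_apply (i k : Fin N) :
    (∑ j, permMatrix (P j)) i k = #{j | P j i = k} := by
  simp [Matrix.sum_apply, permMatrix]

lemma exists_two_le_sum_permMatrix_iff :
    (∃ i k, 2 ≤ (∑ j, permMatrix (P j)) i k) ↔ ¬ Function.Injective (blockEnds P) := by
  simp only [sum_permMatrix_apply, Nat.succ_le_iff, one_lt_card, mem_filter, mem_univ, true_and,
    Function.Injective, Prod.forall, blockEnds_eq_iff]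
  push Not
  constructor
  · rintro ⟨i, k, j, rfl, j', hj', hne⟩
    exact ⟨j, P j i, j', P j i, ⟨rfl, by simp [Equiv.eq_symm_apply, hj']⟩, by simp [hne]⟩
  · rintro ⟨j, k, j', k', ⟨rfl, hk⟩, hne⟩
    exact ⟨(P j).symm k, k, j, by simp, j', by simp [hk], by simpa using hne⟩

def rowColEquiv : Fin N ⊕ Fin N ≃ Fin 2 × Fin N where
  toFun := Sum.elim ((1, ·)) ((0, ·))
  invFun p := if p.1 = 0 then inr p.2 else inl p.2
  left_inv := by rintro (i | k) <;> simp
  right_inv := by rintro ⟨b, x⟩; fin_cases b <;> rfl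

def tannerSumPermIso :
    tanner (∑ j, permMatrix (P j)) ≃g fromEdgeSet (Set.range (blockEnds P)) where
  toEquiv := rowColEquiv
  map_rel_iff' := by
    rintro (i | k) (i' | k') <;>
      simp [rowColEquiv, blockEnds, tanner, sum_permMatrix_apply, Equiv.symm_apply_eq]

end Block

theorem stmt6 {N nv : ℕ} (P : Fin nv → Equiv.Perm (Fin N)) :
    matGirth (H2mat P) = 2 * matGirth (∑ j, permMatrix (P j)) := by
  rw [matGirth_of_le_one (H2mat_le_one P), tanner_H2mat, matGirth]
  split_ifs with hmult
  · rw [egirth_subdivision_of_not_injective (blockEnds_not_isDiag P)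
      ((exists_two_le_sum_permMatrix_iff P).1 hmult)]
    rfl
  · rw [egirth_subdivision ((exists_two_le_sum_permMatrix_iff P).not_left.1 hmult),
      (tannerSumPermIso P).egirth_eq]
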